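/- arXiv:2105.04592 — 2 statements merged into one kernel-verified Lean document; each statement's English description precedes it below -/
import Mathlib

section
/- Let E be a field and (D, S) a multiplicative summation on R to E. Then for every x ∈ E, there exists a series X ∈ R[[σ]] that is rationally summable over S to x if and only if there exist a, b in the image S(D) with b ≠ 0 and x = a·b⁻¹. (The image of the rational extension of S is the field of fractions of S(D) inside E.) -/
/-- A summation on a commutative ring `R` to a commutative `R`-algebra `E`:
an `R`-submodule `D` of `R[[σ]]` containing all polynomials, together with a map
`S` (whose values are only meaningful on `D`) which is `R`-linear on `D`,
sums `1` to `1`, and is invariant under multiplication by `1 - σ`. -/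
structure Summation (R E : Type*) [CommRing R] [CommRing E] [Algebra R E] where
  D : Submodule R (PowerSeries R)
  S : PowerSeries R → E
  S_add : ∀ X ∈ D, ∀ Y ∈ D, S (X + Y) = S X + S Y
  S_smul : ∀ (r : R), ∀ X ∈ D, S (r • X) = r • S X
  poly_mem : ∀ F : Polynomial R, (F : PowerSeries R) ∈ D
  S_one : S 1 = 1
  shift_mem : ∀ X ∈ D, (1 - PowerSeries.X) * X ∈ D
  S_shift : ∀ X ∈ D, S ((1 - PowerSeries.X) * X) = 0


/-- A multiplicative summation: the domain is moreover an `R`-subalgebra of `R[[σ]]`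
and `S` is an `R`-algebra homomorphism on it. -/
structure MulSummation (R E : Type*) [CommRing R] [CommRing E] [Algebra R E]
    extends Summation R E where
  mul_mem : ∀ X ∈ D, ∀ Y ∈ D, X * Y ∈ D
  S_mul : ∀ X ∈ D, ∀ Y ∈ D, S (X * Y) = S X * S Y

/-- `X` is rationally summable over the multiplicative summation `𝒮` to `x`
(with the codomain a field, regularity of `𝒮.S B` means `𝒮.S B ≠ 0`). -/
def RatSummable {R E : Type*} [CommRing R] [CommRing E] [Algebra R E]
    (𝒮 : MulSummation R E) (X : PowerSeries R) (x : E) : Prop :=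
  ∃ A B : PowerSeries R, A ∈ 𝒮.D ∧ B ∈ 𝒮.D ∧ A = B * X ∧
    𝒮.S B ≠ 0 ∧ 𝒮.S A = 𝒮.S B * x

/-!
Every quotient `S A / S B` with `S B ≠ 0` is attained: replacing `B` by
`B + (1 - σ) (1 - B)` does not change its sum, by shift invariance, but makes its constant
coefficient `1`, so that it becomes a unit of `R[[σ]]`; then `X = B⁻¹ A` is rationally summable
to `S A / S B`.
-/

namespace Summation

variable {R E : Type*} [CommRing R] [CommRing E] [Algebra R E] (𝒮 : Summation R E)

theorem one_mem : (1 : PowerSeries R) ∈ 𝒮.D := by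
  simpa using 𝒮.poly_mem 1

theorem exists_isUnit_mem_S_eq {B : PowerSeries R} (hB : B ∈ 𝒮.D) :
    ∃ B' ∈ 𝒮.D, IsUnit B' ∧ 𝒮.S B' = 𝒮.S B := by
  have h1B : 1 - B ∈ 𝒮.D := sub_mem 𝒮.one_mem hB
  have hshift := 𝒮.shift_mem _ h1B
  refine ⟨B + (1 - PowerSeries.X) * (1 - B), add_mem hB hshift, ?_, ?_⟩
  · exact PowerSeries.isUnit_iff_constantCoeff.2 (by simp)
  · rw [𝒮.S_add _ hB _ hshift, 𝒮.S_shift _ h1B, add_zero]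

end Summation

theorem RatSummable.exists_eq_mul_inv {R E : Type*} [CommRing R] [Field E] [Algebra R E]
    {𝒮 : MulSummation R E} {X : PowerSeries R} {x : E} (h : RatSummable 𝒮 X x) :
    ∃ A ∈ 𝒮.D, ∃ B ∈ 𝒮.D, 𝒮.S B ≠ 0 ∧ x = 𝒮.S A * (𝒮.S B)⁻¹ := by
  obtain ⟨A, B, hA, hB, -, hSB, hSA⟩ := h
  exact ⟨A, hA, B, hB, hSB, by rw [hSA, mul_comm, inv_mul_cancel_left₀ hSB]⟩

theorem MulSummation.exists_ratSummable_mul_inv {R E : Type*} [CommRing R] [Field E]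
    [Algebra R E] (𝒮 : MulSummation R E) {A B : PowerSeries R} (hA : A ∈ 𝒮.D) (hB : B ∈ 𝒮.D)
    (hSB : 𝒮.S B ≠ 0) : ∃ X, RatSummable 𝒮 X (𝒮.S A * (𝒮.S B)⁻¹) := by
  obtain ⟨B', hB', ⟨u, rfl⟩, hS⟩ := 𝒮.exists_isUnit_mem_S_eq hB
  refine ⟨↑u⁻¹ * A, A, u, hA, hB', by rw [← mul_assoc, Units.mul_inv, one_mul], ?_, ?_⟩
  · rwa [hS]
  · rw [hS, mul_comm, inv_mul_cancel_right₀ hSB]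

theorem ratSummable_image_eq_fractionField_general {R E : Type*} [CommRing R]
    [Field E] [Algebra R E] (𝒮 : MulSummation R E) (x : E) :
    (∃ X : PowerSeries R, RatSummable 𝒮 X x) ↔
    (∃ a b : E, (∃ A ∈ 𝒮.D, 𝒮.S A = a) ∧ (∃ B ∈ 𝒮.D, 𝒮.S B = b) ∧
      b ≠ 0 ∧ x = a * b⁻¹) := by
  constructor
  · rintro ⟨X, hX⟩
    obtain ⟨A, hA, B, hB, hSB, rfl⟩ := hX.exists_eq_mul_inv
    exact ⟨_, _, ⟨A, hA, rfl⟩, ⟨B, hB, rfl⟩, hSB, rfl⟩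
  · rintro ⟨a, b, ⟨A, hA, rfl⟩, ⟨B, hB, rfl⟩, hb, rfl⟩
    exact 𝒮.exists_ratSummable_mul_inv hA hB hb

theorem ratSummable_image_eq_fractionField {R E : Type*} [CommRing R] [Nontrivial R]
    [Field E] [Algebra R E] (𝒮 : MulSummation R E) (x : E) :
    (∃ X : PowerSeries R, RatSummable 𝒮 X x) ↔
    (∃ a b : E, (∃ A ∈ 𝒮.D, 𝒮.S A = a) ∧ (∃ B ∈ 𝒮.D, 𝒮.S B = b) ∧
      b ≠ 0 ∧ x = a * b⁻¹) :=
  ratSummable_image_eq_fractionField_general 𝒮 x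
end

section
/- Let C ∈ ℝ[[σ]] be the power series whose coefficient of σ^{n²} is (−1)ⁿ/n for each integer n ≥ 1 and whose other coefficients are 0. Then C is convergent, but for every nonzero polynomial F ∈ ℝ[σ], the product F·C is not absolutely convergent. (A convergent series need not be telescopable over the absolutely convergent summation.) -/
/-!
The coefficients of `C` sit on the squares, so the partial sums of `C` are the partial sums of
the alternating harmonic series, each held constant between consecutive squares, and therefore
converge. A polynomial `F` of degree `d` cannot create cancellation far out: once `2n ≥ d` the gap
between `n²` and `(n + 1)²` exceeds `d`, so the coefficient of `σ^(n² + d)` in `F·C` is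
`lead(F) · (-1)ⁿ / n`, and these coefficients alone already form a multiple of the harmonic series.
-/
/-- A formal power series over `ℝ` is convergent if its sequence of partial sums
converges. -/
def Convergent (X : PowerSeries ℝ) : Prop :=
  ∃ l : ℝ, Filter.Tendsto (fun N : ℕ => ∑ n ∈ Finset.range N, PowerSeries.coeff n X)
    Filter.atTop (nhds l)

/-- A formal power series over `ℝ` is absolutely convergent if the series of the
absolute values of its coefficients is summable. -/
def AbsConvergent (X : PowerSeries ℝ) : Prop :=
  Summable fun n : ℕ => |PowerSeries.coeff n X|

open Filter Finset Topology

section StrictMonoReindex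

variable {M : Type*} [AddCommMonoid M] {g : ℕ → ℕ}

theorem StrictMono.exists_lt_iff_lt (hg : StrictMono g) (N : ℕ) :
    ∃ c, ∀ k, g k < N ↔ k < c := by
  classical
  have hN : ∃ k, N ≤ g k := ⟨N, hg.id_le N⟩
  refine ⟨Nat.find hN, fun k => ⟨fun hk => ?_, fun hk => not_le.mp (Nat.find_min hN hk)⟩⟩
  by_contra! hck
  exact (Nat.find_spec hN).not_gt ((hg.monotone hck).trans_lt hk)

theorem sum_range_eq_sum_range_comp_of_injective {f : ℕ → M}
    (hg : Function.Injective g) (hf : ∀ m ∉ Set.range g, f m = 0) {N c : ℕ}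
    (hc : ∀ k, g k < N ↔ k < c) :
    ∑ m ∈ range N, f m = ∑ k ∈ range c, f (g k) := by
  have hpre : (range N).preimage g hg.injOn = range c := by ext k; simp [hc]
  rw [← hpre, sum_preimage _ _ _ _ fun m _ => hf m]

theorem tendsto_sum_range_of_comp_strictMono [TopologicalSpace M] {f : ℕ → M}
    (hg : StrictMono g) (hf : ∀ m ∉ Set.range g, f m = 0) {l : M}
    (h : Tendsto (fun K => ∑ k ∈ range K, f (g k)) atTop (𝓝 l)) :
    Tendsto (fun N => ∑ m ∈ range N, f m) atTop (𝓝 l) := by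
  choose c hc using hg.exists_lt_iff_lt
  have hc_tendsto : Tendsto c atTop atTop :=
    tendsto_atTop_atTop.2 fun K => ⟨g K + 1, fun N hN => ((hc N K).1 (by omega)).le⟩
  exact (h.comp hc_tendsto).congr fun N =>
    (sum_range_eq_sum_range_comp_of_injective hg.injective hf (hc N)).symm

end StrictMonoReindex

theorem Real.exists_tendsto_sum_range_neg_one_pow_succ_div :
    ∃ l, Tendsto (fun K => ∑ k ∈ range K, (-1 : ℝ) ^ (k + 1) / ((k : ℝ) + 1)) atTop (𝓝 l) := by
  have hanti : Antitone fun k : ℕ => 1 / ((k : ℝ) + 1) := fun a b hab =>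
    one_div_le_one_div_of_le (by positivity) (by gcongr)
  obtain ⟨l, hl⟩ :=
    hanti.tendsto_alternating_series_of_tendsto_zero tendsto_one_div_add_atTop_nhds_zero_nat
  refine ⟨-l, hl.neg.congr fun K => ?_⟩
  rw [← sum_neg_distrib]
  refine sum_congr rfl fun k _ => ?_
  ring

theorem PowerSeries.coeff_add_natDegree_polynomial_mul {R : Type*} [Semiring R]
    (F : Polynomial R) (X : PowerSeries R) {m : ℕ}
    (hX : ∀ j, m < j → j ≤ m + F.natDegree → coeff j X = 0) :
    coeff (m + F.natDegree) ((F : PowerSeries R) * X) = F.leadingCoeff * coeff m X := by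
  rw [coeff_mul, sum_eq_single_of_mem (F.natDegree, m) (by simp [add_comm])]
  · rw [Polynomial.coeff_coe, Polynomial.leadingCoeff]
  rintro ⟨k, j⟩ hkj hne
  rw [HasAntidiagonal.mem_antidiagonal] at hkj
  rcases lt_trichotomy k F.natDegree with hk | rfl | hk
  · rw [hX j (by omega) (by omega), mul_zero]
  · exact absurd (by omega : j = m) (by simpa using hne)
  · rw [Polynomial.coeff_coe, Polynomial.coeff_eq_zero_of_natDegree_lt hk, zero_mul]

theorem PowerSeries.coeff_sq_add_natDegree_polynomial_mul {R : Type*} [Semiring R]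
    {X : PowerSeries R} (hX : ∀ m, (∀ k, k ^ 2 ≠ m) → coeff m X = 0) (F : Polynomial R) {n : ℕ}
    (hn : F.natDegree ≤ 2 * n) :
    coeff (n ^ 2 + F.natDegree) ((F : PowerSeries R) * X) = F.leadingCoeff * coeff (n ^ 2) X := by
  refine coeff_add_natDegree_polynomial_mul F X fun j hlt hle => hX j fun k hk => ?_
  exact Nat.not_exists_sq' hlt (by nlinarith) ⟨k, hk⟩

theorem convergent_not_telescopable_over_abs (C : PowerSeries ℝ)
    (h1 : ∀ n : ℕ, 1 ≤ n → PowerSeries.coeff (n ^ 2) C = (-1 : ℝ) ^ n / n)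
    (h2 : ∀ m : ℕ, (∀ n : ℕ, 1 ≤ n → m ≠ n ^ 2) → PowerSeries.coeff m C = 0) :
    Convergent C ∧
    ∀ F : Polynomial ℝ, F ≠ 0 → ¬ AbsConvergent ((F : PowerSeries ℝ) * C) := by
  constructor
  · have hoff : ∀ m ∉ Set.range fun k : ℕ => (k + 1) ^ 2, PowerSeries.coeff m C = 0 :=
      fun m hm => h2 m fun n hn hmn => hm ⟨n - 1, by simp only [Nat.sub_add_cancel hn, hmn]⟩
    obtain ⟨l, hl⟩ := Real.exists_tendsto_sum_range_neg_one_pow_succ_div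
    refine ⟨l, tendsto_sum_range_of_comp_strictMono (fun a b hab => by gcongr) hoff ?_⟩
    simpa only [h1 _ (Nat.succ_pos _), Nat.cast_succ] using hl
  · intro F hF habs
    set d := F.natDegree
    have hsq : ∀ m, (∀ k, k ^ 2 ≠ m) → PowerSeries.coeff m C = 0 :=
      fun m hm => h2 m fun n _ hmn => hm n hmn.symm
    have hinj : Function.Injective fun n : ℕ => (n + (d + 1)) ^ 2 + d :=
      fun a b hab => by simpa using hab
    have hharmonic : Summable fun n : ℕ => |F.leadingCoeff| * (1 / ((n + (d + 1) : ℕ) : ℝ)) := by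
      refine (habs.comp_injective hinj).congr fun n => ?_
      rw [Function.comp_apply, PowerSeries.coeff_sq_add_natDegree_polynomial_mul hsq F (by omega),
        h1 _ (by omega), abs_mul, abs_div, abs_pow, abs_neg, abs_one, one_pow, Nat.abs_cast]
    have hlead : |F.leadingCoeff| ≠ 0 := abs_ne_zero.2 (Polynomial.leadingCoeff_ne_zero.2 hF)
    exact Real.not_summable_one_div_natCast
      ((summable_nat_add_iff (d + 1)).1 ((summable_mul_left_iff hlead).1 hharmonic))
end
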